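/- In the reduction graph H built from a bipartite RBDS instance: if H has a safe set S of size at most s = k + |R| + 1, then {u} ∪ R ⊆ S, S is connected, and B ∩ S is a set of size at most k dominating R in G. -/

import Mathlib

variable {V : Type*}

/-- Two vertex sets are adjacent if some edge joins them. -/
def SetsAdj (G : SimpleGraph V) (A B : Set V) : Prop :=
  ∃ a ∈ A, ∃ b ∈ B, G.Adj a b

/-- `u` and `v` are connected inside the induced subgraph `G[S]`. -/
def ReachIn (G : SimpleGraph V) (S : Set V) (u v : V) : Prop :=
  ∃ (hu : u ∈ S) (hv : v ∈ S), (G.induce S).Reachable ⟨u, hu⟩ ⟨v, hv⟩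

/-- `C` is (the vertex set of) a connected component of the induced subgraph `G[S]`. -/
def IsCompOf (G : SimpleGraph V) (S C : Set V) : Prop :=
  ∃ v ∈ S, C = {u | ReachIn G S u v}

/-- A safe set: nonempty, and no component of `G[S]` is adjacent to a larger
component of `G - S`. -/
def IsSafeSet (G : SimpleGraph V) (S : Set V) : Prop :=
  S.Nonempty ∧ ∀ C D : Set V, IsCompOf G S C → IsCompOf G Sᶜ D →
    SetsAdj G C D → D.ncard ≤ C.ncard

/-- A connected safe set. -/
def IsConnSafeSet (G : SimpleGraph V) (S : Set V) : Prop :=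
  IsSafeSet G S ∧ (G.induce S).Connected

/-- The safe number: minimum size of a safe set. -/
noncomputable def sNum (G : SimpleGraph V) : ℕ :=
  sInf {n | ∃ S : Set V, IsSafeSet G S ∧ S.ncard = n}

/-- The connected safe number: minimum size of a connected safe set. -/
noncomputable def csNum (G : SimpleGraph V) : ℕ :=
  sInf {n | ∃ S : Set V, IsConnSafeSet G S ∧ S.ncard = n}

/-- Vertices of the reduction graph `H` built from an RBDS instance `(R, B; E, k)`,
where `s` is the target safe-set size: the hub `u`, the red and blue vertices,
`2s` pendant leaves at the hub and at each red vertex, and for each red vertex a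
star `K_{1,s-1}` (a center and `s - 1` leaves). -/
inductive HVert (R B : Type*) (s : ℕ) : Type _
  | hub : HVert R B s
  | red : R → HVert R B s
  | blue : B → HVert R B s
  | pendHub : Fin (2 * s) → HVert R B s
  | pendRed : R → Fin (2 * s) → HVert R B s
  | starCenter : R → HVert R B s
  | starLeaf : R → Fin (s - 1) → HVert R B s

/-- The (one-sided) adjacency relation of the reduction graph. -/
def HRel (R B : Type*) (s : ℕ) (E : R → B → Prop) :
    HVert R B s → HVert R B s → Prop
  | .red r, .blue b => E r b
  | .hub, .blue _ => True
  | .hub, .pendHub _ => True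
  | .red r, .pendRed r' _ => r = r'
  | .red r, .starCenter r' => r = r'
  | .starCenter r, .starLeaf r' _ => r = r'
  | _, _ => False

/-- The reduction graph `H`. -/
def HGraph (R B : Type*) (s : ℕ) (E : R → B → Prop) : SimpleGraph (HVert R B s) :=
  SimpleGraph.fromRel (HRel R B s E)

/-!
A vertex with `2s` pendant leaves lies in every safe set `S` of size at most `s`: otherwise its
component in `H - S` has more than `s` vertices and, `H` being connected, is adjacent to some
component of `H[S]`. Hence `{u} ∪ R ⊆ S`, which leaves at most `k < |R|` further vertices of `S`,
so one of the disjoint attached stars misses `S`. That star is a component of `H - S` with `s`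
vertices, adjacent to the component of its red vertex in `H[S]`; so this component has at least
`s ≥ |S|` vertices and is all of `S`. Finally, a path of `H[S]` from `r ∈ R` to `u` has to leave
the gadget hanging at `r`, and the only way out is through a blue neighbour of `r`.
-/

section SafeSet
variable {G : SimpleGraph V} {S : Set V} {u v w x y : V}

/-- Empty when `v ∉ S`. -/
def reachSet (G : SimpleGraph V) (S : Set V) (v : V) : Set V :=
  {u | ReachIn G S u v}

lemma reachIn_refl (h : v ∈ S) : ReachIn G S v v := ⟨h, h, .refl _⟩

lemma ReachIn.trans (h : ReachIn G S u v) (h' : ReachIn G S v w) : ReachIn G S u w :=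
  ⟨h.1, h'.2.1, h.2.2.trans h'.2.2⟩

lemma reachIn_of_adj (hu : u ∈ S) (hv : v ∈ S) (h : G.Adj u v) : ReachIn G S u v :=
  ⟨hu, hv, SimpleGraph.Adj.reachable (G := G.induce S) h⟩

lemma reachSet_subset : reachSet G S v ⊆ S := fun _ h => h.1

lemma isCompOf_reachSet (hv : v ∈ S) : IsCompOf G S (reachSet G S v) := ⟨v, hv, rfl⟩

lemma ReachIn.mem_of_closed {T : Set V}
    (hT : ∀ ⦃a b : V⦄, a ∈ T → b ∈ S → G.Adj a b → b ∈ T)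
    (h : ReachIn G S u v) (hu : u ∈ T) : v ∈ T := by
  obtain ⟨huS, hvS, ⟨p⟩⟩ := h
  suffices ∀ a b : S, (G.induce S).Walk a b → a.1 ∈ T → b.1 ∈ T from this _ _ p hu
  intro a b p
  induction p with
  | nil => exact id
  | cons hadj _ ih => exact fun ha => ih (hT ha (Subtype.prop _) hadj)

lemma exists_reachIn_compl_adj_of_reachable {a b : V} (hab : G.Reachable a b)
    (ha : a ∉ S) (hb : b ∈ S) : ∃ x y, ReachIn G Sᶜ x a ∧ y ∈ S ∧ G.Adj x y := by
  obtain ⟨p⟩ := hab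
  induction p with
  | nil => exact absurd hb ha
  | @cons a c _ hac _ ih =>
    by_cases hc : c ∈ S
    · exact ⟨a, c, reachIn_refl ha, hc, hac⟩
    · obtain ⟨x, y, hxc, hy, hxy⟩ := ih hc hb
      exact ⟨x, y, hxc.trans (reachIn_of_adj hc ha hac.symm), hy, hxy⟩

lemma IsSafeSet.ncard_reachSet_compl_le (hS : IsSafeSet G S) (hxv : ReachIn G Sᶜ x v)
    (hy : y ∈ S) (hxy : G.Adj x y) : (reachSet G Sᶜ v).ncard ≤ (reachSet G S y).ncard :=
  hS.2 _ _ (isCompOf_reachSet hy) (isCompOf_reachSet hxv.2.1)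
    ⟨y, reachIn_refl hy, x, hxv, hxy.symm⟩

lemma induce_connected_of_reachSet_eq (hy : y ∈ S) (h : reachSet G S y = S) :
    (G.induce S).Connected := by
  rw [SimpleGraph.connected_iff_exists_forall_reachable]
  refine ⟨⟨y, hy⟩, fun ⟨z, hz⟩ => ?_⟩
  rw [← h] at hz
  exact hz.2.2.symm

lemma IsSafeSet.induce_connected [Finite V] (hS : IsSafeSet G S) (hxv : ReachIn G Sᶜ x v)
    (hy : y ∈ S) (hxy : G.Adj x y) (hbig : S.ncard ≤ (reachSet G Sᶜ v).ncard) :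
    (G.induce S).Connected := by
  refine induce_connected_of_reachSet_eq hy (Set.eq_of_subset_of_ncard_le reachSet_subset ?_)
  exact hbig.trans (hS.ncard_reachSet_compl_le hxv hy hxy)

lemma IsSafeSet.mem_of_two_mul_le_ncard_neighborSet [Finite V] (hS : IsSafeSet G S)
    (hG : G.Connected) {s : ℕ} (hcard : S.ncard ≤ s) (hdeg : 2 * s ≤ (G.neighborSet v).ncard) :
    v ∈ S := by
  by_contra hv
  -- At least `s` neighbours of `v` lie outside `S`, so the component of `v` in `G - S` has more
  -- than `s` vertices, yet connectivity makes it adjacent to a component of `G[S]`.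
  have hout : s ≤ (G.neighborSet v \ S).ncard :=
    le_trans (by omega) (Set.le_ncard_sdiff S (G.neighborSet v))
  have hcomp : insert v (G.neighborSet v \ S) ⊆ reachSet G Sᶜ v := by
    rintro z (rfl | ⟨hz, hzS⟩)
    · exact reachIn_refl hv
    · exact reachIn_of_adj hzS hv (G.adj_symm hz)
  have hbig : s + 1 ≤ (reachSet G Sᶜ v).ncard := by
    have := Set.ncard_le_ncard hcomp
    rw [Set.ncard_insert_of_notMem (fun h => h.1.ne rfl)] at this
    omega
  obtain ⟨w, hw⟩ := hS.1
  obtain ⟨x, y, hxv, hy, hxy⟩ := exists_reachIn_compl_adj_of_reachable (hG v w) hv hw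
  have hsafe := hS.ncard_reachSet_compl_le hxv hy hxy
  have hsmall := (Set.ncard_le_ncard (reachSet_subset (G := G) (v := y))).trans hcard
  omega

end SafeSet

namespace HVert

variable {R B : Type*} {s : ℕ}

private def encode : HVert R B s →
    Unit ⊕ R ⊕ B ⊕ Fin (2 * s) ⊕ (R × Fin (2 * s)) ⊕ R ⊕ (R × Fin (s - 1))
  | .hub => .inl ()
  | .red r => .inr (.inl r)
  | .blue b => .inr (.inr (.inl b))
  | .pendHub i => .inr (.inr (.inr (.inl i)))
  | .pendRed r i => .inr (.inr (.inr (.inr (.inl (r, i)))))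
  | .starCenter r => .inr (.inr (.inr (.inr (.inr (.inl r)))))
  | .starLeaf r i => .inr (.inr (.inr (.inr (.inr (.inr (r, i))))))

instance [Finite R] [Finite B] : Finite (HVert R B s) :=
  Finite.of_injective encode fun x y h => by cases x <;> cases y <;> simp_all [encode]

def starVert (r : R) : Option (Fin (s - 1)) → HVert R B s
  | none => .starCenter r
  | some i => .starLeaf r i

def owner : HVert R B s → Option R
  | .red r | .pendRed r _ | .starCenter r | .starLeaf r _ => some r
  | _ => none

@[simp] lemma owner_starVert (r : R) (o : Option (Fin (s - 1))) :
    (starVert (B := B) r o).owner = some r := by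
  cases o <;> rfl

lemma starVert_injective (r : R) : Function.Injective (starVert (B := B) (s := s) r) := by
  rintro (_ | _) (_ | _) h <;> simp_all [starVert]

def core : Set (HVert R B s) := insert .hub (Set.range .red)

lemma ncard_range_starVert (r : R) :
    (Set.range (starVert (B := B) (s := s) r)).ncard = s - 1 + 1 := by
  rw [Set.ncard_range_of_injective (starVert_injective r), Nat.card_eq_fintype_card,
    Fintype.card_option, Fintype.card_fin]

lemma starVert_notMem_core (r : R) (o : Option (Fin (s - 1))) :
    starVert (B := B) r o ∉ core := by
  cases o <;> simp [core, starVert]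

lemma ncard_core [Fintype R] : (core : Set (HVert R B s)).ncard = Fintype.card R + 1 := by
  rw [core, Set.ncard_insert_of_notMem (by simp),
    Set.ncard_range_of_injective fun _ _ h => by simpa using h, Nat.card_eq_fintype_card]

end HVert

open HVert

section HGraph

variable {R B : Type*} {s : ℕ} {E : R → B → Prop}

lemma hGraph_adj {x y : HVert R B s} :
    (HGraph R B s E).Adj x y ↔ x ≠ y ∧ (HRel R B s E x y ∨ HRel R B s E y x) :=
  SimpleGraph.fromRel_adj _ _ _

lemma hGraph_adj_hub_blue (b : B) : (HGraph R B s E).Adj .hub (.blue b) := by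
  simp [hGraph_adj, HRel]

lemma hGraph_adj_hub_pendHub (i : Fin (2 * s)) : (HGraph R B s E).Adj .hub (.pendHub i) := by
  simp [hGraph_adj, HRel]

lemma hGraph_adj_red_blue {r : R} {b : B} (h : E r b) :
    (HGraph R B s E).Adj (.red r) (.blue b) := by
  simp [hGraph_adj, HRel, h]

lemma hGraph_adj_red_pendRed (r : R) (i : Fin (2 * s)) :
    (HGraph R B s E).Adj (.red r) (.pendRed r i) := by
  simp [hGraph_adj, HRel]

lemma hGraph_adj_red_starCenter (r : R) : (HGraph R B s E).Adj (.red r) (.starCenter r) := by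
  simp [hGraph_adj, HRel]

lemma hGraph_adj_starCenter_starLeaf (r : R) (i : Fin (s - 1)) :
    (HGraph R B s E).Adj (.starCenter r) (.starLeaf r i) := by
  simp [hGraph_adj, HRel]

lemma owner_of_hGraph_adj {r : R} {x y : HVert R B s} (hxy : (HGraph R B s E).Adj x y)
    (hx : x.owner = some r) : y.owner = some r ∨ ∃ b, y = .blue b ∧ E r b := by
  rw [hGraph_adj] at hxy
  cases x <;> cases y <;> simp_all [owner, HRel]

lemma hGraph_connected (hconn : ∀ r : R, ∃ b : B, E r b) : (HGraph R B s E).Connected := by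
  rw [SimpleGraph.connected_iff_exists_forall_reachable]
  refine ⟨.hub, fun x => ?_⟩
  have hred (r : R) : (HGraph R B s E).Reachable .hub (.red r) := by
    obtain ⟨b, hb⟩ := hconn r
    exact (hGraph_adj_hub_blue b).reachable.trans (hGraph_adj_red_blue hb).reachable.symm
  cases x with
  | hub => rfl
  | red r => exact hred r
  | blue b => exact (hGraph_adj_hub_blue b).reachable
  | pendHub i => exact (hGraph_adj_hub_pendHub i).reachable
  | pendRed r i => exact (hred r).trans (hGraph_adj_red_pendRed r i).reachable
  | starCenter r => exact (hred r).trans (hGraph_adj_red_starCenter r).reachable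
  | starLeaf r i =>
    exact (hred r).trans <| (hGraph_adj_red_starCenter r).reachable.trans
      (hGraph_adj_starCenter_starLeaf r i).reachable

lemma range_starVert_subset_reachSet {S : Set (HVert R B s)} {r : R}
    (hr : ∀ o, starVert r o ∉ S) :
    Set.range (starVert r) ⊆ reachSet (HGraph R B s E) Sᶜ (.starCenter r) := by
  rintro _ ⟨_ | i, rfl⟩
  · exact reachIn_refl (hr none)
  · exact reachIn_of_adj (hr (some i)) (hr none) (hGraph_adj_starCenter_starLeaf r i).symm

/-- Otherwise every path of `H[S]` from `r` stays among the vertices owned by `r`, and the hub is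
not one of them. -/
lemma exists_blue_mem_of_induce_connected {S : Set (HVert R B s)}
    (hS : ((HGraph R B s E).induce S).Connected)
    (hhub : HVert.hub ∈ S) {r : R} (hr : HVert.red r ∈ S) :
    ∃ b : B, HVert.blue b ∈ S ∧ E r b := by
  by_contra! hno
  have hreach : ReachIn (HGraph R B s E) S (.red r) .hub := ⟨hr, hhub, hS.preconnected _ _⟩
  have hclosed : ∀ ⦃x y : HVert R B s⦄, x ∈ {z | z.owner = some r} → y ∈ S →
      (HGraph R B s E).Adj x y → y ∈ {z | z.owner = some r} := by
    intro x y hx hy hxy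
    obtain h | ⟨b, rfl, hb⟩ := owner_of_hGraph_adj hxy hx
    exacts [h, absurd hb (hno b hy)]
  simpa [owner] using hreach.mem_of_closed hclosed rfl

variable [Finite R] [Finite B]

lemma two_mul_le_ncard_neighborSet_hub : 2 * s ≤ ((HGraph R B s E).neighborSet .hub).ncard := by
  calc 2 * s = (Set.range (pendHub (R := R) (B := B) (s := s))).ncard := by
        rw [Set.ncard_range_of_injective fun _ _ h => by simpa using h, Nat.card_fin]
    _ ≤ _ := Set.ncard_le_ncard <| Set.range_subset_iff.2 hGraph_adj_hub_pendHub

lemma two_mul_le_ncard_neighborSet_red (r : R) :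
    2 * s ≤ ((HGraph R B s E).neighborSet (.red r)).ncard := by
  calc 2 * s = (Set.range (pendRed (B := B) r)).ncard := by
        rw [Set.ncard_range_of_injective fun _ _ h => by simpa using h, Nat.card_fin]
    _ ≤ _ := Set.ncard_le_ncard <| Set.range_subset_iff.2 (hGraph_adj_red_pendRed r)

end HGraph

section Reduction

variable {R B : Type*} [Fintype R] [Finite B] {s : ℕ} {E : R → B → Prop}
  {S : Set (HVert R B s)}

lemma ncard_le_of_subset_sdiff_core (hcore : core ⊆ S) {X : Set (HVert R B s)}
    (hX : X ⊆ S \ core) : X.ncard + (Fintype.card R + 1) ≤ S.ncard := by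
  have := Set.ncard_le_ncard hX
  rw [Set.ncard_sdiff hcore, ncard_core] at this
  have := Set.ncard_le_ncard hcore
  rw [ncard_core] at this
  omega

/-- Pigeonhole: the stars are disjoint and miss the core, so if each met `S` then `S` would have
at least `2|R| + 1` vertices. -/
lemma exists_forall_starVert_notMem {k : ℕ} (hk : k < Fintype.card R) (hcore : core ⊆ S)
    (hcard : S.ncard ≤ k + Fintype.card R + 1) : ∃ r : R, ∀ o, starVert (B := B) r o ∉ S := by
  by_contra! h
  choose o ho using h
  have hinj : Function.Injective fun r => starVert (B := B) r (o r) := fun a b hab => by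
    simpa using congrArg owner hab
  have hsub : Set.range (fun r => starVert (B := B) r (o r)) ⊆ S \ core := by
    rintro _ ⟨r, rfl⟩
    exact ⟨ho r, starVert_notMem_core r (o r)⟩
  have := ncard_le_of_subset_sdiff_core hcore hsub
  rw [Set.ncard_range_of_injective hinj, Nat.card_eq_fintype_card] at this
  omega

lemma ncard_blue_le {k : ℕ} (hcore : core ⊆ S) (hcard : S.ncard ≤ k + Fintype.card R + 1) :
    {b : B | HVert.blue b ∈ S}.ncard ≤ k := by
  have hsub : HVert.blue '' {b : B | HVert.blue b ∈ S} ⊆ S \ core := by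
    rintro _ ⟨b, hb, rfl⟩
    exact ⟨hb, by simp [core]⟩
  have := ncard_le_of_subset_sdiff_core hcore hsub
  rw [Set.ncard_image_of_injective _ fun _ _ h => by simpa using h] at this
  omega

end Reduction

theorem stmt11 {R B : Type*} [Fintype R] [Fintype B] (E : R → B → Prop) (k : ℕ)
    (hk : k < Fintype.card R)
    (hconn : ∀ r : R, ∃ b : B, E r b)
    (S : Set (HVert R B (k + Fintype.card R + 1)))
    (hS : IsSafeSet (HGraph R B (k + Fintype.card R + 1) E) S)
    (hcard : S.ncard ≤ k + Fintype.card R + 1) :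
    (HVert.hub ∈ S ∧ ∀ r : R, HVert.red r ∈ S) ∧
    ((HGraph R B (k + Fintype.card R + 1) E).induce S).Connected ∧
    {b : B | HVert.blue b ∈ S}.ncard ≤ k ∧
    ∀ r : R, ∃ b : B, HVert.blue b ∈ S ∧ E r b := by
  have hH := hGraph_connected (s := k + Fintype.card R + 1) hconn
  have hhub : HVert.hub ∈ S :=
    hS.mem_of_two_mul_le_ncard_neighborSet hH hcard two_mul_le_ncard_neighborSet_hub
  have hred (r : R) : HVert.red r ∈ S :=
    hS.mem_of_two_mul_le_ncard_neighborSet hH hcard (two_mul_le_ncard_neighborSet_red r)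
  have hcore : core ⊆ S := by
    rintro _ (rfl | ⟨r, rfl⟩)
    exacts [hhub, hred r]
  obtain ⟨r, hr⟩ := exists_forall_starVert_notMem hk hcore hcard
  have hstar : S.ncard ≤ (reachSet _ Sᶜ (.starCenter r)).ncard :=
    calc S.ncard ≤ (Set.range (starVert r)).ncard := by rw [ncard_range_starVert]; omega
      _ ≤ _ := Set.ncard_le_ncard (range_starVert_subset_reachSet (E := E) hr)
  have hSconn := hS.induce_connected (reachIn_refl (hr none)) (hred r)
    (hGraph_adj_red_starCenter r).symm hstar
  exact ⟨⟨hhub, hred⟩, hSconn, ncard_blue_le hcore hcard,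
    fun r => exists_blue_mem_of_induce_connected hSconn hhub (hred r)⟩
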